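/- arXiv:1706.02936 — 3 statements merged into one kernel-verified Lean document; each statement's English description precedes it below -/
import Mathlib

section
/- Let m ≥ 1, 0 < m̲ ≤ m, and 0 < κ̲ < κ. Suppose c : ℝ^N → ℝ is continuously differentiable, convex, nonnegative, and satisfies κ̲‖ν‖^{m̲} ≤ ‖∇c(ν)‖ for all ν, and suppose b : ℝ^N → ℝ^N is continuously differentiable with ‖∇b(ν)‖ ≤ C for all ν. Then there exists a constant C' > 0 such that any maximizer ν* of the map ν ↦ b(ν)·z − c(ν) satisfies ‖ν*‖ ≤ C'(1 + ‖z‖^{1/m̲}). -/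
/-!
A maximiser `ν*` is a critical point, so `∇c(ν*) = Db(ν*)ᵀ z` and hence
`κ̲ ‖ν*‖^m̲ ≤ ‖∇c(ν*)‖ ≤ C ‖z‖`; solving for `‖ν*‖` gives `‖ν*‖ ≤ (C/κ̲)^(1/m̲) ‖z‖^(1/m̲)`.
-/

open scoped RealInnerProductSpace

section FirstOrderCondition

variable {E F : Type*} [NormedAddCommGroup E] [InnerProductSpace ℝ E]
  [NormedAddCommGroup F] [InnerProductSpace ℝ F]
  {b : E → F} {c : E → ℝ} {z : F} {x : E}

theorem fderiv_eq_innerSL_comp_of_isLocalMax (hb : DifferentiableAt ℝ b x)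
    (hc : DifferentiableAt ℝ c x) (hmax : IsLocalMax (fun ν => ⟪b ν, z⟫ - c ν) x) :
    fderiv ℝ c x = (innerSL ℝ z).comp (fderiv ℝ b x) := by
  have hpairing : HasFDerivAt (fun ν => ⟪b ν, z⟫) ((innerSL ℝ z).comp (fderiv ℝ b x)) x :=
    ((innerSL ℝ z).hasFDerivAt.comp x hb.hasFDerivAt).congr_of_eventuallyEq
      (Filter.Eventually.of_forall fun ν => real_inner_comm z (b ν))
  exact (sub_eq_zero.mp (hmax.hasFDerivAt_eq_zero (hpairing.sub hc.hasFDerivAt))).symm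

theorem norm_gradient_le_of_isLocalMax [CompleteSpace E] (hb : DifferentiableAt ℝ b x)
    (hc : DifferentiableAt ℝ c x) (hmax : IsLocalMax (fun ν => ⟪b ν, z⟫ - c ν) x) :
    ‖gradient c x‖ ≤ ‖fderiv ℝ b x‖ * ‖z‖ := by
  rw [gradient, LinearIsometryEquiv.norm_map, fderiv_eq_innerSL_comp_of_isLocalMax hb hc hmax]
  calc ‖(innerSL ℝ z).comp (fderiv ℝ b x)‖ ≤ ‖innerSL ℝ z‖ * ‖fderiv ℝ b x‖ :=
        ContinuousLinearMap.opNorm_comp_le _ _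
    _ = ‖fderiv ℝ b x‖ * ‖z‖ := by rw [innerSL_apply_norm, mul_comm]

end FirstOrderCondition

theorem le_mul_rpow_of_mul_rpow_le {r s κ K p : ℝ} (hr : 0 ≤ r) (hs : 0 ≤ s) (hκ : 0 < κ)
    (hK : 0 ≤ K) (hp : 0 < p) (h : κ * r ^ p ≤ K * s) :
    r ≤ (K / κ) ^ (1 / p) * s ^ (1 / p) := by
  rw [← Real.mul_rpow (by positivity) hs, one_div,
    Real.le_rpow_inv_iff_of_pos hr (by positivity) hp, div_mul_eq_mul_div, le_div_iff₀ hκ]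
  linarith

theorem stmt0_general (N : ℕ) (mlow κlow C : ℝ)
    (hmlow : 0 < mlow)
    (hκlow : 0 < κlow)
    (c : EuclideanSpace ℝ (Fin N) → ℝ)
    (b : EuclideanSpace ℝ (Fin N) → EuclideanSpace ℝ (Fin N))
    (hc1 : ContDiff ℝ 1 c)
    (hgrad : ∀ ν, κlow * ‖ν‖ ^ mlow ≤ ‖gradient c ν‖)
    (hb1 : ContDiff ℝ 1 b) (hbder : ∀ ν, ‖fderiv ℝ b ν‖ ≤ C) :
    ∃ C' > 0, ∀ z νstar : EuclideanSpace ℝ (Fin N),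
      IsMaxOn (fun ν => ⟪b ν, z⟫ - c ν) Set.univ νstar →
      ‖νstar‖ ≤ C' * (1 + ‖z‖ ^ (1 / mlow)) := by
  have hC : 0 ≤ C := (norm_nonneg _).trans (hbder 0)
  set D := (C / κlow) ^ (1 / mlow)
  have hD : 0 ≤ D := by positivity
  refine ⟨D + 1, by positivity, fun z νstar hmax => ?_⟩
  have hcritical : κlow * ‖νstar‖ ^ mlow ≤ C * ‖z‖ :=
    calc κlow * ‖νstar‖ ^ mlow ≤ ‖gradient c νstar‖ := hgrad νstar
      _ ≤ ‖fderiv ℝ b νstar‖ * ‖z‖ :=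
        norm_gradient_le_of_isLocalMax (hb1.differentiable one_ne_zero νstar)
          (hc1.differentiable one_ne_zero νstar) (hmax.isLocalMax Filter.univ_mem)
      _ ≤ C * ‖z‖ := by gcongr; exact hbder νstar
  have hzpow : 0 ≤ ‖z‖ ^ (1 / mlow) := by positivity
  calc ‖νstar‖ ≤ D * ‖z‖ ^ (1 / mlow) :=
        le_mul_rpow_of_mul_rpow_le (norm_nonneg _) (norm_nonneg _) hκlow hC hmlow hcritical
    _ ≤ (D + 1) * (1 + ‖z‖ ^ (1 / mlow)) := by nlinarith

theorem stmt0 (N : ℕ) (hN : 1 ≤ N) (m mlow κlow κ C : ℝ)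
    (hm : 1 ≤ m) (hmlow : 0 < mlow) (hmlowm : mlow ≤ m)
    (hκlow : 0 < κlow) (hκ : κlow < κ)
    (c : EuclideanSpace ℝ (Fin N) → ℝ)
    (b : EuclideanSpace ℝ (Fin N) → EuclideanSpace ℝ (Fin N))
    (hc1 : ContDiff ℝ 1 c) (hcconv : ConvexOn ℝ Set.univ c)
    (hcpos : ∀ ν, 0 ≤ c ν)
    (hgrad : ∀ ν, κlow * ‖ν‖ ^ mlow ≤ ‖gradient c ν‖)
    (hb1 : ContDiff ℝ 1 b) (hbder : ∀ ν, ‖fderiv ℝ b ν‖ ≤ C) :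
    ∃ C' > 0, ∀ z νstar : EuclideanSpace ℝ (Fin N),
      IsMaxOn (fun ν => ⟪b ν, z⟫ - c ν) Set.univ νstar →
      ‖νstar‖ ≤ C' * (1 + ‖z‖ ^ (1 / mlow)) :=
  stmt0_general N mlow κlow C hmlow hκlow c b hc1 hgrad hb1 hbder
end

section
/- Fix R_A > 0, T > 0, an invertible 2×2 matrix Σ, K = diag(k₁,k₂) with k₁,k₂ > 0, appetence parameters γ₁, γ₂ ∈ [0,1], and Γ := (1+γ₁−γ₂, 1+γ₂−γ₁)ᵀ. Set M := (I + 2R_A K⁻²ΣΣᵀ)⁻¹ and λ̃ := Γ·(K²MΓ) − (5R_A/4)‖ΣᵀMΓ‖² − (3/4)‖KMΓ‖². Then v¹(t,x) := λ̃(T−t) + (1+γ₁)x₁ − γ₁x₂ satisfies −∂ₜv¹ − (1/2)Tr(ΣΣᵀ∇²ₓv¹) − (1/2)Γ·(K²MΓ) + (R_A/4)‖ΣᵀMΓ‖² + (1/4)‖KMΓ‖² = 0 with v¹(T,x) = (1+γ₁)x₁ − γ₁x₂. -/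
open Matrix

/-! With `u = MΓ` we have `(I + 2R_A K⁻²ΣΣᵀ) u = Γ`, so multiplying by the symmetric `K²` gives
`Γ · K²u = u · (K² + 2R_A ΣΣᵀ) u = ‖Ku‖² + 2R_A ‖Σᵀu‖²`. Since `v¹` is affine in `x` and in `t`,
its Hessian vanishes and `-∂ₜv¹ = λ̃`, so this identity is exactly what makes the HJB residual zero. -/

noncomputable def grad2 (f : (Fin 2 → ℝ) → ℝ) (x : Fin 2 → ℝ) : Fin 2 → ℝ :=
  fun i => fderiv ℝ f x (Pi.single i 1)

noncomputable def hess2 (f : (Fin 2 → ℝ) → ℝ) (x : Fin 2 → ℝ) : Matrix (Fin 2) (Fin 2) ℝ :=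
  Matrix.of fun i j => fderiv ℝ (fun y => fderiv ℝ f y (Pi.single j 1)) x (Pi.single i 1)

section QuadraticIdentity

variable {n : Type*} [Fintype n]

theorem dotProduct_mulVec_self_eq (A : Matrix n n ℝ) (u : n → ℝ) :
    u ⬝ᵥ (A * Aᵀ) *ᵥ u = Aᵀ *ᵥ u ⬝ᵥ Aᵀ *ᵥ u := by
  rw [← mulVec_mulVec, dotProduct_mulVec, ← mulVec_transpose]

variable [DecidableEq n]

theorem dotProduct_sq_mulVec_eq_of_mulVec_eq {K S : Matrix n n ℝ} (hKt : Kᵀ = K)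
    (hK : IsUnit K.det) (c : ℝ) {u Γ : n → ℝ}
    (hu : (1 + c • (K⁻¹ * K⁻¹ * S * Sᵀ)) *ᵥ u = Γ) :
    Γ ⬝ᵥ (K * K) *ᵥ u = K *ᵥ u ⬝ᵥ K *ᵥ u + c * (Sᵀ *ᵥ u ⬝ᵥ Sᵀ *ᵥ u) := by
  have hKK : K * K * (1 + c • (K⁻¹ * K⁻¹ * S * Sᵀ)) = K * Kᵀ + c • (S * Sᵀ) := by
    rw [hKt, mul_add, mul_one, mul_smul_comm]
    simp only [← Matrix.mul_assoc]
    rw [Matrix.mul_assoc K K, mul_nonsing_inv K hK, Matrix.mul_one, mul_nonsing_inv K hK,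
      Matrix.one_mul]
  calc Γ ⬝ᵥ (K * K) *ᵥ u
      = u ⬝ᵥ (K * K * (1 + c • (K⁻¹ * K⁻¹ * S * Sᵀ))) *ᵥ u := by
        rw [← mulVec_mulVec u (K * K), hu, dotProduct_mulVec, ← mulVec_transpose, transpose_mul,
          hKt, dotProduct_comm]
    _ = K *ᵥ u ⬝ᵥ K *ᵥ u + c * (Sᵀ *ᵥ u ⬝ᵥ Sᵀ *ᵥ u) := by
        rw [hKK, add_mulVec, smul_mulVec, dotProduct_add, dotProduct_smul,
          dotProduct_mulVec_self_eq, dotProduct_mulVec_self_eq, hKt, smul_eq_mul]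

/-- When `I + c K⁻²SSᵀ` is singular, `M = 0` (junk inverse) and both sides vanish. -/
theorem dotProduct_sq_mulVec_inv_eq {K S M : Matrix n n ℝ} (hKt : Kᵀ = K) (hK : IsUnit K.det)
    {c : ℝ} (hM : M = (1 + c • (K⁻¹ * K⁻¹ * S * Sᵀ))⁻¹) (Γ : n → ℝ) :
    Γ ⬝ᵥ (K * K) *ᵥ (M *ᵥ Γ)
      = K *ᵥ (M *ᵥ Γ) ⬝ᵥ K *ᵥ (M *ᵥ Γ) + c * (Sᵀ *ᵥ (M *ᵥ Γ) ⬝ᵥ Sᵀ *ᵥ (M *ᵥ Γ)) := by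
  by_cases hN : IsUnit (1 + c • (K⁻¹ * K⁻¹ * S * Sᵀ)).det
  · refine dotProduct_sq_mulVec_eq_of_mulVec_eq hKt hK c ?_
    rw [hM, mulVec_mulVec, mul_nonsing_inv _ hN, one_mulVec]
  · simp [hM, nonsing_inv_apply_not_isUnit _ hN]

end QuadraticIdentity

theorem hess2_eq_zero_of_hasFDerivAt {f : (Fin 2 → ℝ) → ℝ} {L : (Fin 2 → ℝ) →L[ℝ] ℝ}
    (hf : ∀ y, HasFDerivAt f L y) (x : Fin 2 → ℝ) : hess2 f x = 0 := by
  ext i j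
  simp [hess2, fun y => (hf y).fderiv]

theorem stmt3_general (R_A T k₁ k₂ γ₁ : ℝ)
    (hk₁ : 0 < k₁) (hk₂ : 0 < k₂)
    (Sig : Matrix (Fin 2) (Fin 2) ℝ)
    (Γ : Fin 2 → ℝ)
    (K : Matrix (Fin 2) (Fin 2) ℝ) (hK : K = Matrix.diagonal ![k₁, k₂])
    (M : Matrix (Fin 2) (Fin 2) ℝ)
    (hM : M = (1 + (2 * R_A) • (K⁻¹ * K⁻¹ * Sig * Sigᵀ))⁻¹)
    (lamt : ℝ)
    (hlamt : lamt = Γ ⬝ᵥ ((K * K).mulVec (M.mulVec Γ))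
      - 5 * R_A / 4 * (Sigᵀ.mulVec (M.mulVec Γ) ⬝ᵥ Sigᵀ.mulVec (M.mulVec Γ))
      - 3 / 4 * (K.mulVec (M.mulVec Γ) ⬝ᵥ K.mulVec (M.mulVec Γ)))
    (v₁ : ℝ → (Fin 2 → ℝ) → ℝ)
    (hv₁ : ∀ t x, v₁ t x = lamt * (T - t) + (1 + γ₁) * x 0 - γ₁ * x 1) :
    (∀ t ∈ Set.Icc (0 : ℝ) T, ∀ x : Fin 2 → ℝ,
      -(deriv (fun s => v₁ s x) t)
      - 1 / 2 * (Sig * Sigᵀ * hess2 (v₁ t) x).trace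
      - 1 / 2 * (Γ ⬝ᵥ ((K * K).mulVec (M.mulVec Γ)))
      + R_A / 4 * (Sigᵀ.mulVec (M.mulVec Γ) ⬝ᵥ Sigᵀ.mulVec (M.mulVec Γ))
      + 1 / 4 * (K.mulVec (M.mulVec Γ) ⬝ᵥ K.mulVec (M.mulVec Γ)) = 0)
    ∧ ∀ x : Fin 2 → ℝ, v₁ T x = (1 + γ₁) * x 0 - γ₁ * x 1 := by
  have hKdet : IsUnit K.det := by
    simpa [hK, Fin.prod_univ_two] using mul_ne_zero hk₁.ne' hk₂.ne'
  have hKt : Kᵀ = K := by rw [hK, diagonal_transpose]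
  have hkey := dotProduct_sq_mulVec_inv_eq hKt hKdet hM Γ
  refine ⟨fun t _ x => ?_, fun x => by rw [hv₁]; ring⟩
  have hderiv : deriv (fun s => v₁ s x) t = -lamt := by
    simp [hv₁]
  set L : (Fin 2 → ℝ) →L[ℝ] ℝ := (1 + γ₁) • .proj 0 - γ₁ • .proj 1
  have hv₁_affine : v₁ t = fun z => lamt * (T - t) + L z := by
    funext z
    simp only [hv₁, L, _root_.sub_apply, _root_.smul_apply,
      ContinuousLinearMap.proj_apply, smul_eq_mul]
    ring
  have hhess : hess2 (v₁ t) x = 0 :=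
    hess2_eq_zero_of_hasFDerivAt (fun y => hv₁_affine ▸ L.hasFDerivAt.const_add _) x
  rw [hderiv, hhess, Matrix.mul_zero, trace_zero, hlamt, hkey]
  ring

theorem stmt3 (R_A T k₁ k₂ γ₁ γ₂ : ℝ) (hRA : 0 < R_A) (hT : 0 < T)
    (hk₁ : 0 < k₁) (hk₂ : 0 < k₂)
    (hγ₁ : γ₁ ∈ Set.Icc (0 : ℝ) 1) (hγ₂ : γ₂ ∈ Set.Icc (0 : ℝ) 1)
    (Sig : Matrix (Fin 2) (Fin 2) ℝ) (hSig : IsUnit Sig)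
    (Γ : Fin 2 → ℝ) (hΓ : Γ = ![1 + γ₁ - γ₂, 1 + γ₂ - γ₁])
    (K : Matrix (Fin 2) (Fin 2) ℝ) (hK : K = Matrix.diagonal ![k₁, k₂])
    (M : Matrix (Fin 2) (Fin 2) ℝ)
    (hM : M = (1 + (2 * R_A) • (K⁻¹ * K⁻¹ * Sig * Sigᵀ))⁻¹)
    (lamt : ℝ)
    (hlamt : lamt = Γ ⬝ᵥ ((K * K).mulVec (M.mulVec Γ))
      - 5 * R_A / 4 * (Sigᵀ.mulVec (M.mulVec Γ) ⬝ᵥ Sigᵀ.mulVec (M.mulVec Γ))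
      - 3 / 4 * (K.mulVec (M.mulVec Γ) ⬝ᵥ K.mulVec (M.mulVec Γ)))
    (v₁ : ℝ → (Fin 2 → ℝ) → ℝ)
    (hv₁ : ∀ t x, v₁ t x = lamt * (T - t) + (1 + γ₁) * x 0 - γ₁ * x 1) :
    (∀ t ∈ Set.Icc (0 : ℝ) T, ∀ x : Fin 2 → ℝ,
      -(deriv (fun s => v₁ s x) t)
      - 1 / 2 * (Sig * Sigᵀ * hess2 (v₁ t) x).trace
      - 1 / 2 * (Γ ⬝ᵥ ((K * K).mulVec (M.mulVec Γ)))
      + R_A / 4 * (Sigᵀ.mulVec (M.mulVec Γ) ⬝ᵥ Sigᵀ.mulVec (M.mulVec Γ))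
      + 1 / 4 * (K.mulVec (M.mulVec Γ) ⬝ᵥ K.mulVec (M.mulVec Γ)) = 0)
    ∧ ∀ x : Fin 2 → ℝ, v₁ T x = (1 + γ₁) * x 0 - γ₁ * x 1 :=
  stmt3_general R_A T k₁ k₂ γ₁ hk₁ hk₂ Sig Γ K hK M hM lamt hlamt v₁ hv₁
end

section
/- Fix R_A > 0, k > 0, and γ₁, γ₂ ∈ [0,1] with γ₁ > γ₂. For ρ ∈ [−1,1), define ν^{1,*}(ρ) := [2R_A k³((1+γ₂−γ₁)ρ − (1+γ₁−γ₂)) − k⁵(1+γ₁−γ₂)] / D(ρ) and ν^{2,*}(ρ) := [2R_A k³((1+γ₁−γ₂)ρ − (1+γ₂−γ₁)) − k⁵(1+γ₂−γ₁)] / D(ρ), where D(ρ) := 2R_A²(ρ²−1) − 4R_A k² − k⁴. Then ν^{1,*}(ρ) > ν^{2,*}(ρ) for all ρ ∈ [−1,1). -/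
theorem stmt9 (R_A k γ₁ γ₂ : ℝ) (hRA : 0 < R_A) (hk : 0 < k)
    (hγ₁ : γ₁ ∈ Set.Icc (0 : ℝ) 1) (hγ₂ : γ₂ ∈ Set.Icc (0 : ℝ) 1) (h : γ₂ < γ₁) :
    ∀ ρ ∈ Set.Ico (-1 : ℝ) 1,
      (2 * R_A * k ^ 3 * ((1 + γ₂ - γ₁) * ρ - (1 + γ₁ - γ₂)) - k ^ 5 * (1 + γ₁ - γ₂))
          / (2 * R_A ^ 2 * (ρ ^ 2 - 1) - 4 * R_A * k ^ 2 - k ^ 4)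
      > (2 * R_A * k ^ 3 * ((1 + γ₁ - γ₂) * ρ - (1 + γ₂ - γ₁)) - k ^ 5 * (1 + γ₂ - γ₁))
          / (2 * R_A ^ 2 * (ρ ^ 2 - 1) - 4 * R_A * k ^ 2 - k ^ 4) := by
  intro ρ hρ
  obtain ⟨h1, h2⟩ := hρ
  have hD : 2 * R_A ^ 2 * (ρ ^ 2 - 1) - 4 * R_A * k ^ 2 - k ^ 4 < 0 := by
    nlinarith [mul_nonneg (by linarith : (0:ℝ) ≤ 1 - ρ) (by linarith : (0:ℝ) ≤ 1 + ρ), mul_pos hRA hRA, mul_pos hk hk, pow_pos hk 4, mul_pos hRA (pow_pos hk 2)]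
  rw [gt_iff_lt, div_lt_div_right_of_neg hD]
  nlinarith [mul_nonneg (mul_nonneg (mul_pos hRA (pow_pos hk 3)).le (by linarith : (0:ℝ) ≤ γ₁ - γ₂)) (by linarith : (0:ℝ) ≤ ρ + 1), mul_pos (pow_pos hk 5) (by linarith : (0:ℝ) < γ₁ - γ₂)]
end
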